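/- arXiv:2303.11913 — 4 statements merged into one kernel-verified Lean document; each statement's English description precedes it below -/
import Mathlib

section
/- The function σ_d(α) = (α(2d − α + 1) − {α}(1 − {α}))/2 is continuous and strictly increasing on the interval [0, d]. -/
/-! For `0 ≤ α ≤ d` we have `σ_d(α) = ∑_{k=1}^{d} min(α, k)`: with `n = ⌊α⌋`, the terms `k ≤ n`
contribute `1 + ⋯ + n = n(n+1)/2`, the remaining `d - n` terms contribute `α` each, and
substituting `n = α - {α}` gives the formula for `σ_d`. Each `min(α, k)` is continuous and
monotone, and the term `k = d` is `α` itself on `[0, d]`, so the sum is continuous and strictly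
increasing there. -/

open Finset

section LinearOrderedField

variable {K : Type*} [Field K] [LinearOrder K] [IsStrictOrderedRing K]

theorem sum_range_natCast_add_one (n : ℕ) : ∑ k ∈ range n, ((k : K) + 1) = n * (n + 1) / 2 := by
  induction n with
  | zero => simp
  | succ m ih =>
    rw [sum_range_succ, ih]
    push_cast
    ring

theorem sum_range_min_natCast_add_one_eq [FloorRing K] {d : ℕ} {α : K} (h0 : 0 ≤ α)
    (hαd : α ≤ d) :
    ∑ k ∈ range d, min α ((k : K) + 1) =
      (α * (2 * d - α + 1) - Int.fract α * (1 - Int.fract α)) / 2 := by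
  set n := ⌊α⌋₊
  have hnα : (n : K) ≤ α := Nat.floor_le h0
  have hαn : α < n + 1 := Nat.lt_floor_add_one α
  have hnd : n ≤ d := Nat.floor_le_of_le hαd
  have hfract : Int.fract α = α - n := by rw [Int.fract, natCast_floor_eq_intCast_floor h0]
  have hlow : ∑ k ∈ range n, min α ((k : K) + 1) = ∑ k ∈ range n, ((k : K) + 1) := by
    refine sum_congr rfl fun k hk => min_eq_right (le_trans ?_ hnα)
    exact_mod_cast mem_range.mp hk
  have hhigh : ∑ k ∈ Ico n d, min α ((k : K) + 1) = ∑ k ∈ Ico n d, α := by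
    refine sum_congr rfl fun k hk => min_eq_left (hαn.le.trans ?_)
    exact_mod_cast Nat.add_le_add_right (mem_Ico.mp hk).1 1
  rw [← sum_range_add_sum_Ico _ hnd, hlow, hhigh, sum_range_natCast_add_one, sum_const,
    Nat.card_Ico, nsmul_eq_mul, Nat.cast_sub hnd, hfract]
  ring

theorem strictMonoOn_sum_range_min_natCast_add_one (d : ℕ) :
    StrictMonoOn (fun α : K => ∑ k ∈ range d, min α ((k : K) + 1)) (Set.Icc 0 (d : K)) := by
  intro x hx y hy hxy
  have hd : 0 < d := by exact_mod_cast hx.1.trans_lt (hxy.trans_le hy.2)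
  refine sum_lt_sum (fun k _ => min_le_min_right _ hxy.le) ⟨d - 1, by simp [hd], ?_⟩
  rw [Nat.cast_pred hd, sub_add_cancel, min_eq_left (hxy.le.trans hy.2), min_eq_left hy.2]
  exact hxy

end LinearOrderedField

theorem sigma_continuous_strictMono_general (d : ℕ) :
    ContinuousOn
        (fun α : ℝ => (α * (2 * d - α + 1) - Int.fract α * (1 - Int.fract α)) / 2)
        (Set.Icc 0 (d : ℝ)) ∧
      StrictMonoOn
        (fun α : ℝ => (α * (2 * d - α + 1) - Int.fract α * (1 - Int.fract α)) / 2)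
        (Set.Icc 0 (d : ℝ)) := by
  have hσ : Set.EqOn (fun α : ℝ => ∑ k ∈ range d, min α ((k : ℝ) + 1))
      (fun α : ℝ => (α * (2 * d - α + 1) - Int.fract α * (1 - Int.fract α)) / 2)
      (Set.Icc 0 (d : ℝ)) :=
    fun α hα => sum_range_min_natCast_add_one_eq hα.1 hα.2
  have hcont : Continuous fun α : ℝ => ∑ k ∈ range d, min α ((k : ℝ) + 1) := by fun_prop
  exact ⟨hcont.continuousOn.congr hσ.symm,
    (strictMonoOn_sum_range_min_natCast_add_one d).congr hσ⟩

/-- The function `σ_d(α) = (α(2d − α + 1) − {α}(1 − {α}))/2` is continuous and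
strictly increasing on `[0, d]`. -/
theorem sigma_continuous_strictMono (d : ℕ) (hd : 1 ≤ d) :
    ContinuousOn
        (fun α : ℝ => (α * (2 * d - α + 1) - Int.fract α * (1 - Int.fract α)) / 2)
        (Set.Icc 0 (d : ℝ)) ∧
      StrictMonoOn
        (fun α : ℝ => (α * (2 * d - α + 1) - Int.fract α * (1 - Int.fract α)) / 2)
        (Set.Icc 0 (d : ℝ)) :=
  sigma_continuous_strictMono_general d
end

section
/- Let α ∈ (0,d) be a non-integer real number and set k₀ = ⌊d−α⌋ + 1. Then for all integers k ≥ 0 and all τ ∈ [0,1], the function F(k,τ) = d(d+1)/2 + k(k−1+2τ)/2 − (k+τ)(d−α) satisfies F(k,τ) ≥ F(k₀, 0), and moreover F(k₀, 0) = α(2d−α+1)/2 − {α}(1−{α})/2. -/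
/-- For non-integer `α ∈ (0,d)` and `k₀ = ⌊d−α⌋ + 1`, the function
`F(k,τ) = d(d+1)/2 + k(k−1+2τ)/2 − (k+τ)(d−α)` satisfies `F(k,τ) ≥ F(k₀,0)`
for all integers `k ≥ 0` and `τ ∈ [0,1]`, and
`F(k₀,0) = α(2d−α+1)/2 − {α}(1−{α})/2`. -/
theorem F_min (d : ℕ) (hd : 2 ≤ d) (α : ℝ) (hnint : ¬ ∃ m : ℤ, α = m)
    (h0 : 0 < α) (h1 : α < d) :
    (∀ k : ℤ, 0 ≤ k → ∀ τ : ℝ, 0 ≤ τ → τ ≤ 1 →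
      (d : ℝ) * (d + 1) / 2 + (⌊(d : ℝ) - α⌋ + 1 : ℝ) * ((⌊(d : ℝ) - α⌋ + 1 : ℝ) - 1 + 2 * 0) / 2
          - ((⌊(d : ℝ) - α⌋ + 1 : ℝ) + 0) * (d - α)
        ≤ (d : ℝ) * (d + 1) / 2 + (k : ℝ) * ((k : ℝ) - 1 + 2 * τ) / 2 - ((k : ℝ) + τ) * (d - α)) ∧
    (d : ℝ) * (d + 1) / 2 + (⌊(d : ℝ) - α⌋ + 1 : ℝ) * ((⌊(d : ℝ) - α⌋ + 1 : ℝ) - 1 + 2 * 0) / 2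
        - ((⌊(d : ℝ) - α⌋ + 1 : ℝ) + 0) * (d - α)
      = α * (2 * d - α + 1) / 2 - Int.fract α * (1 - Int.fract α) / 2 := by
  have hfa : Int.fract α ≠ 0 := by
    intro h
    exact hnint ⟨⌊α⌋, by
      have : α - (⌊α⌋ : ℝ) = 0 := h
      linarith⟩
  have hβf : Int.fract ((d : ℝ) - α) = 1 - Int.fract α := by
    have h : (d : ℝ) - α = -α + ((d : ℤ) : ℝ) := by push_cast; ring
    rw [h, Int.fract_add_intCast, Int.fract_neg hfa]
  have hm1 : (⌊(d : ℝ) - α⌋ : ℝ) + 1 = (d : ℝ) - α + Int.fract α := by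
    have h := Int.self_sub_fract ((d : ℝ) - α)
    rw [hβf] at h
    linarith
  have hf0 : 0 < Int.fract α := lt_of_le_of_ne (Int.fract_nonneg α) (Ne.symm hfa)
  have hf1 : Int.fract α < 1 := Int.fract_lt_one α
  have hml : (⌊(d : ℝ) - α⌋ : ℝ) < (d : ℝ) - α := by linarith
  have hmu : (d : ℝ) - α < (⌊(d : ℝ) - α⌋ : ℝ) + 1 := by linarith
  constructor
  · intro k hk τ hτ0 hτ1
    set m : ℤ := ⌊(d : ℝ) - α⌋ with hm
    rcases le_or_gt k m with hk2 | hk2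
    · rcases lt_or_eq_of_le hk2 with hk3 | hk3
      · have hkr : (k : ℝ) ≤ (m : ℝ) - 1 := by
          have : k ≤ m - 1 := by omega
          exact_mod_cast this
        nlinarith [mul_nonneg (by linarith : (0:ℝ) ≤ 1 - τ)
            (by linarith : (0:ℝ) ≤ ((d : ℝ) - α) - (k : ℝ)),
          mul_nonneg (by linarith : (0:ℝ) ≤ (m : ℝ) - (k : ℝ))
            (by linarith : (0:ℝ) ≤ ((d : ℝ) - α) - (m : ℝ)),
          mul_nonneg (by linarith : (0:ℝ) ≤ (m : ℝ) - (k : ℝ))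
            (by linarith : (0:ℝ) ≤ (m : ℝ) - (k : ℝ) - 1)]
      · have hkr : (k : ℝ) = (m : ℝ) := by exact_mod_cast hk3
        nlinarith [mul_nonneg (by linarith : (0:ℝ) ≤ 1 - τ)
            (by linarith : (0:ℝ) ≤ ((d : ℝ) - α) - (m : ℝ))]
    · rcases eq_or_lt_of_le (Int.add_one_le_of_lt hk2) with hk3 | hk3
      · have hkr : (k : ℝ) = (m : ℝ) + 1 := by
          have : k = m + 1 := by omega
          rw [this]; push_cast; ring
        nlinarith [mul_nonneg hτ0
            (by linarith : (0:ℝ) ≤ (m : ℝ) + 1 - ((d : ℝ) - α))]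
      · have hkr : (m : ℝ) + 2 ≤ (k : ℝ) := by
          have : m + 2 ≤ k := by omega
          exact_mod_cast this
        nlinarith [mul_nonneg hτ0
            (by linarith : (0:ℝ) ≤ (k : ℝ) - ((d : ℝ) - α)),
          mul_nonneg (by linarith : (0:ℝ) ≤ (k : ℝ) - (m : ℝ) - 1)
            (by linarith : (0:ℝ) ≤ (k : ℝ) - (m : ℝ) - 2),
          mul_nonneg (by linarith : (0:ℝ) ≤ (k : ℝ) - (m : ℝ) - 1)
            (by linarith : (0:ℝ) ≤ (m : ℝ) + 1 - ((d : ℝ) - α))]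
  · rw [hm1]; ring
end

section
/- For any real x ≥ 1 and integer i ≥ 2, the number of i-th power-full integers n with 1 ≤ n ≤ x is O(x^{1/i}); precisely, it is at most C·x^{1/i} for a constant C depending only on i. -/
open Finset

/-- An integer `n ≥ 1` is `i`-th power-full if `p^i ∣ n` for every prime `p ∣ n`. -/
def PowerFull (i n : ℕ) : Prop := ∀ p : ℕ, p.Prime → p ∣ n → p ^ i ∣ n

-- ncard of a finite union is at most the sum of ncards
lemma ncard_biUnion_le' {β : Type*} (s : Finset ℕ) (f : ℕ → Set β) :
    (⋃ a ∈ s, f a).ncard ≤ ∑ a ∈ s, (f a).ncard := by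
  classical
  induction s using Finset.induction with
  | empty => simp
  | insert _ _ hx ih =>
    rename_i a s
    rw [Finset.set_biUnion_insert, Finset.sum_insert hx]
    exact le_trans (Set.ncard_union_le _ _) (by omega)

-- counting nats up to a real bound
lemma ncard_nat_le (z : ℝ) (hz : 0 ≤ z) :
    ({a : ℕ | 1 ≤ a ∧ (a : ℝ) ≤ z}.ncard : ℝ) ≤ z := by
  have hsub : {a : ℕ | 1 ≤ a ∧ (a : ℝ) ≤ z} ⊆ ↑(Finset.Icc 1 ⌊z⌋₊) := by
    intro a ha
    simp only [Finset.coe_Icc, Set.mem_Icc]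
    exact ⟨ha.1, Nat.le_floor ha.2⟩
  calc ({a : ℕ | 1 ≤ a ∧ (a : ℝ) ≤ z}.ncard : ℝ)
      ≤ ((Finset.Icc 1 ⌊z⌋₊ : Finset ℕ).card : ℝ) := by
        exact_mod_cast Nat.cast_le.mpr
          (le_trans (Set.ncard_le_ncard hsub (Finset.finite_toSet _))
            (le_of_eq (Set.ncard_coe_finset _)))
    _ ≤ z := by
        rw [Nat.card_Icc]
        simp only [Nat.add_sub_cancel]
        exact (Nat.floor_le hz)

lemma sets_finite (i k : ℕ) (y : ℝ) :
    {n : ℕ | 1 ≤ n ∧ (n : ℝ) ≤ y ∧ ∃ a : ℕ, ∃ c : ℕ → ℕ, 1 ≤ a ∧ (∀ j, 1 ≤ c j) ∧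
      n = a ^ i * ∏ j ∈ Finset.Icc (i + 1) (i + k), c j ^ j}.Finite := by
  apply Set.Finite.subset (Set.finite_Icc 1 ⌊y⌋₊)
  intro n hn
  exact ⟨hn.1, Nat.le_floor hn.2.1⟩

lemma count_lemma (i : ℕ) (hi : 2 ≤ i) (k : ℕ) :
    ∃ C : ℝ, 0 < C ∧ ∀ y : ℝ, 0 ≤ y →
      ({n : ℕ | 1 ≤ n ∧ (n : ℝ) ≤ y ∧ ∃ a : ℕ, ∃ c : ℕ → ℕ, 1 ≤ a ∧ (∀ j, 1 ≤ c j) ∧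
          n = a ^ i * ∏ j ∈ Finset.Icc (i + 1) (i + k), c j ^ j}.ncard : ℝ)
        ≤ C * y ^ ((1 : ℝ) / i) := by
  have hi0 : (i : ℝ) ≠ 0 := by positivity
  induction k with
  | zero =>
    refine ⟨1, one_pos, fun y hy => ?_⟩
    have hsub : {n : ℕ | 1 ≤ n ∧ (n : ℝ) ≤ y ∧ ∃ a : ℕ, ∃ c : ℕ → ℕ, 1 ≤ a ∧ (∀ j, 1 ≤ c j) ∧
          n = a ^ i * ∏ j ∈ Finset.Icc (i + 1) (i + 0), c j ^ j}
        ⊆ (fun a => a ^ i) '' {a : ℕ | 1 ≤ a ∧ (a : ℝ) ≤ y ^ ((1 : ℝ) / i)} := by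
      rintro n ⟨hn1, hny, a, c, ha, hc, rfl⟩
      rw [Finset.Icc_eq_empty (by omega), Finset.prod_empty, mul_one] at hny ⊢
      refine ⟨a, ⟨ha, ?_⟩, rfl⟩
      have h1 : ((a : ℝ) ^ (i : ℕ)) ^ ((1 : ℝ) / i) ≤ y ^ ((1 : ℝ) / i) := by
        apply Real.rpow_le_rpow (by positivity) _ (by positivity)
        exact_mod_cast hny
      rwa [← Real.rpow_natCast (a : ℝ) i, ← Real.rpow_mul (by positivity),
        mul_one_div, div_self hi0, Real.rpow_one] at h1
    calc (({n : ℕ | 1 ≤ n ∧ (n : ℝ) ≤ y ∧ ∃ a : ℕ, ∃ c : ℕ → ℕ, 1 ≤ a ∧ (∀ j, 1 ≤ c j) ∧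
          n = a ^ i * ∏ j ∈ Finset.Icc (i + 1) (i + 0), c j ^ j}.ncard : ℝ))
        ≤ (((fun a => a ^ i) '' {a : ℕ | 1 ≤ a ∧ (a : ℝ) ≤ y ^ ((1 : ℝ) / i)}).ncard : ℝ) := by
          have hfin : {a : ℕ | 1 ≤ a ∧ (a : ℝ) ≤ y ^ ((1 : ℝ) / i)}.Finite := by
            apply Set.Finite.subset (Set.finite_Icc 1 ⌊y ^ ((1 : ℝ) / i)⌋₊)
            exact fun a ha => ⟨ha.1, Nat.le_floor ha.2⟩
          exact_mod_cast Nat.cast_le.mpr (Set.ncard_le_ncard hsub (hfin.image _))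
      _ ≤ ({a : ℕ | 1 ≤ a ∧ (a : ℝ) ≤ y ^ ((1 : ℝ) / i)}.ncard : ℝ) := by
          have hfin : {a : ℕ | 1 ≤ a ∧ (a : ℝ) ≤ y ^ ((1 : ℝ) / i)}.Finite := by
            apply Set.Finite.subset (Set.finite_Icc 1 ⌊y ^ ((1 : ℝ) / i)⌋₊)
            exact fun a ha => ⟨ha.1, Nat.le_floor ha.2⟩
          exact_mod_cast Nat.cast_le.mpr (Set.ncard_image_le hfin)
      _ ≤ y ^ ((1 : ℝ) / i) := ncard_nat_le _ (by positivity)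
      _ = 1 * y ^ ((1 : ℝ) / i) := (one_mul _).symm
  | succ k ih =>
    obtain ⟨C, hC, hCb⟩ := ih
    set s : ℝ := 1 + 1 / i with hs
    have hs1 : 1 < s := by
      rw [hs]; nlinarith [one_div_pos.mpr (show (0:ℝ) < i by positivity)]
    have hsummable : Summable (fun c : ℕ => 1 / (c : ℝ) ^ s) :=
      Real.summable_one_div_nat_rpow.mpr hs1
    set Z : ℝ := ∑' c : ℕ, 1 / (c : ℝ) ^ s with hZ
    have hZ0 : 0 ≤ Z := tsum_nonneg (fun c => by positivity)
    refine ⟨C * (Z + 1), by positivity, fun y hy => ?_⟩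
    set j0 : ℕ := i + k + 1 with hj0
    -- the union bound
    have hsub : {n : ℕ | 1 ≤ n ∧ (n : ℝ) ≤ y ∧ ∃ a : ℕ, ∃ c : ℕ → ℕ, 1 ≤ a ∧ (∀ j, 1 ≤ c j) ∧
          n = a ^ i * ∏ j ∈ Finset.Icc (i + 1) (i + (k + 1)), c j ^ j}
        ⊆ ⋃ c ∈ Finset.Icc 1 ⌊y⌋₊, (fun m => m * c ^ j0) ''
            {n : ℕ | 1 ≤ n ∧ (n : ℝ) ≤ y / (c : ℝ) ^ j0 ∧ ∃ a : ℕ, ∃ cc : ℕ → ℕ, 1 ≤ a ∧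
              (∀ j, 1 ≤ cc j) ∧ n = a ^ i * ∏ j ∈ Finset.Icc (i + 1) (i + k), cc j ^ j} := by
      rintro n ⟨hn1, hny, a, c, ha, hc, rfl⟩
      have hicc : i + (k + 1) = j0 := by omega
      rw [hicc] at *
      have hsplit : ∏ j ∈ Finset.Icc (i + 1) j0, c j ^ j
          = (∏ j ∈ Finset.Icc (i + 1) (i + k), c j ^ j) * c j0 ^ j0 := by
        rw [hj0]
        exact Finset.prod_Icc_succ_top (by omega) _
      set m : ℕ := a ^ i * ∏ j ∈ Finset.Icc (i + 1) (i + k), c j ^ j with hm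
      have hm1 : 1 ≤ m :=
        Nat.mul_pos (pow_pos ha i) (Finset.prod_pos fun j _ => pow_pos (hc j) j)
      have hrepr : a ^ i * ∏ j ∈ Finset.Icc (i + 1) j0, c j ^ j = m * c j0 ^ j0 := by
        rw [hsplit, hm]; ring
      have hcj1 : 1 ≤ c j0 := hc j0
      have hcy : (c j0 : ℝ) ≤ y := by
        calc (c j0 : ℝ) ≤ ((c j0 : ℕ) ^ j0 : ℕ) := by
              exact_mod_cast Nat.le_self_pow (by omega) _
          _ ≤ ((m * c j0 ^ j0 : ℕ) : ℝ) := by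
              exact_mod_cast Nat.le_mul_of_pos_left _ hm1
          _ ≤ y := by rw [← hrepr]; exact hny
      refine Set.mem_biUnion (Finset.mem_Icc.mpr ⟨hcj1, Nat.le_floor hcy⟩) ?_
      refine ⟨m, ⟨hm1, ?_, a, c, ha, hc, hm⟩, hrepr.symm⟩
      rw [le_div_iff₀ (by positivity)]
      calc (m : ℝ) * (c j0 : ℝ) ^ j0 = ((m * c j0 ^ j0 : ℕ) : ℝ) := by push_cast; ring
        _ ≤ y := by rw [← hrepr]; exact hny
    -- now the cardinality estimate
    have hN := ncard_biUnion_le' (Finset.Icc 1 ⌊y⌋₊)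
      (fun c => (fun m => m * c ^ j0) ''
        {n : ℕ | 1 ≤ n ∧ (n : ℝ) ≤ y / (c : ℝ) ^ j0 ∧ ∃ a : ℕ, ∃ cc : ℕ → ℕ, 1 ≤ a ∧
          (∀ j, 1 ≤ cc j) ∧ n = a ^ i * ∏ j ∈ Finset.Icc (i + 1) (i + k), cc j ^ j})
    have hstep1 : (({n : ℕ | 1 ≤ n ∧ (n : ℝ) ≤ y ∧ ∃ a : ℕ, ∃ c : ℕ → ℕ, 1 ≤ a ∧
          (∀ j, 1 ≤ c j) ∧
          n = a ^ i * ∏ j ∈ Finset.Icc (i + 1) (i + (k + 1)), c j ^ j}.ncard : ℝ))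
        ≤ ∑ c ∈ Finset.Icc 1 ⌊y⌋₊,
            C * (y / (c : ℝ) ^ j0) ^ ((1 : ℝ) / i) := by
      have hfinU : (⋃ c ∈ Finset.Icc 1 ⌊y⌋₊, (fun m => m * c ^ j0) ''
            {n : ℕ | 1 ≤ n ∧ (n : ℝ) ≤ y / (c : ℝ) ^ j0 ∧ ∃ a : ℕ, ∃ cc : ℕ → ℕ, 1 ≤ a ∧
              (∀ j, 1 ≤ cc j) ∧ n = a ^ i * ∏ j ∈ Finset.Icc (i + 1) (i + k), cc j ^ j}).Finite := by
        apply Set.Finite.biUnion (Finset.finite_toSet _)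
        intro c _
        exact (sets_finite i k _).image _
      calc (({n : ℕ | 1 ≤ n ∧ (n : ℝ) ≤ y ∧ ∃ a : ℕ, ∃ c : ℕ → ℕ, 1 ≤ a ∧ (∀ j, 1 ≤ c j) ∧
            n = a ^ i * ∏ j ∈ Finset.Icc (i + 1) (i + (k + 1)), c j ^ j}.ncard : ℝ))
          ≤ ((∑ c ∈ Finset.Icc 1 ⌊y⌋₊,
              ((fun m => m * c ^ j0) ''
                {n : ℕ | 1 ≤ n ∧ (n : ℝ) ≤ y / (c : ℝ) ^ j0 ∧ ∃ a : ℕ, ∃ cc : ℕ → ℕ, 1 ≤ a ∧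
                  (∀ j, 1 ≤ cc j) ∧
                  n = a ^ i * ∏ j ∈ Finset.Icc (i + 1) (i + k), cc j ^ j}).ncard : ℕ) : ℝ) := by
            exact_mod_cast Nat.cast_le.mpr
              (le_trans (Set.ncard_le_ncard hsub hfinU) hN)
        _ ≤ ∑ c ∈ Finset.Icc 1 ⌊y⌋₊, C * (y / (c : ℝ) ^ j0) ^ ((1 : ℝ) / i) := by
            push_cast
            apply Finset.sum_le_sum
            intro c hc
            have hc1 : 1 ≤ c := (Finset.mem_Icc.mp hc).1
            have hyc : (0 : ℝ) ≤ y / (c : ℝ) ^ j0 := by positivity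
            calc (((fun m => m * c ^ j0) ''
                {n : ℕ | 1 ≤ n ∧ (n : ℝ) ≤ y / (c : ℝ) ^ j0 ∧ ∃ a : ℕ, ∃ cc : ℕ → ℕ, 1 ≤ a ∧
                  (∀ j, 1 ≤ cc j) ∧
                  n = a ^ i * ∏ j ∈ Finset.Icc (i + 1) (i + k), cc j ^ j}).ncard : ℝ)
                ≤ (({n : ℕ | 1 ≤ n ∧ (n : ℝ) ≤ y / (c : ℝ) ^ j0 ∧ ∃ a : ℕ, ∃ cc : ℕ → ℕ,
                    1 ≤ a ∧ (∀ j, 1 ≤ cc j) ∧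
                    n = a ^ i * ∏ j ∈ Finset.Icc (i + 1) (i + k), cc j ^ j}).ncard : ℝ) := by
                  exact_mod_cast Nat.cast_le.mpr (Set.ncard_image_le (sets_finite i k _))
              _ ≤ C * (y / (c : ℝ) ^ j0) ^ ((1 : ℝ) / i) := hCb _ hyc
    -- bound the sum by C * (Z+1) * y^(1/i)
    have hstep2 : ∑ c ∈ Finset.Icc 1 ⌊y⌋₊, C * (y / (c : ℝ) ^ j0) ^ ((1 : ℝ) / i)
        ≤ C * (Z + 1) * y ^ ((1 : ℝ) / i) := by
      have hterm : ∀ c ∈ Finset.Icc 1 ⌊y⌋₊,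
          C * (y / (c : ℝ) ^ j0) ^ ((1 : ℝ) / i)
            ≤ C * y ^ ((1 : ℝ) / i) * (1 / (c : ℝ) ^ s) := by
        intro c hc
        have hc1 : (1 : ℝ) ≤ (c : ℝ) := by
          exact_mod_cast (Finset.mem_Icc.mp hc).1
        have hcpos : (0 : ℝ) < (c : ℝ) := by linarith
        have hdr : (y / (c : ℝ) ^ j0) ^ ((1 : ℝ) / i)
            = y ^ ((1 : ℝ) / i) / ((c : ℝ) ^ (j0 : ℕ)) ^ ((1 : ℝ) / i) :=
          Real.div_rpow hy (pow_nonneg (Nat.cast_nonneg c) j0) ((1 : ℝ) / i)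
        have hpow : (c : ℝ) ^ s ≤ ((c : ℝ) ^ (j0 : ℕ)) ^ ((1 : ℝ) / i) := by
          rw [← Real.rpow_natCast (c : ℝ) j0, ← Real.rpow_mul (le_of_lt hcpos)]
          apply Real.rpow_le_rpow_of_exponent_le hc1
          rw [hs, hj0]
          push_cast
          have hipos : (0 : ℝ) < (i : ℝ) := by positivity
          rw [mul_one_div, le_div_iff₀ hipos, add_mul, one_mul,
            div_mul_cancel₀ _ (ne_of_gt hipos)]
          have hk : (0 : ℝ) ≤ (k : ℝ) := Nat.cast_nonneg k
          linarith
        have hspos : (0 : ℝ) < (c : ℝ) ^ s := Real.rpow_pos_of_pos hcpos s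
        rw [hdr]
        rw [mul_assoc, mul_one_div]
        apply mul_le_mul_of_nonneg_left _ (le_of_lt hC)
        apply div_le_div_of_nonneg_left (by positivity) hspos hpow
      calc ∑ c ∈ Finset.Icc 1 ⌊y⌋₊, C * (y / (c : ℝ) ^ j0) ^ ((1 : ℝ) / i)
          ≤ ∑ c ∈ Finset.Icc 1 ⌊y⌋₊, C * y ^ ((1 : ℝ) / i) * (1 / (c : ℝ) ^ s) :=
            Finset.sum_le_sum hterm
        _ = C * y ^ ((1 : ℝ) / i) * ∑ c ∈ Finset.Icc 1 ⌊y⌋₊, (1 / (c : ℝ) ^ s) := by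
            rw [Finset.mul_sum]
        _ ≤ C * y ^ ((1 : ℝ) / i) * Z := by
            apply mul_le_mul_of_nonneg_left _ (by positivity)
            exact Summable.sum_le_tsum _ (fun c _ => by positivity) hsummable
        _ ≤ C * (Z + 1) * y ^ ((1 : ℝ) / i) := by
            rw [show C * y ^ ((1:ℝ)/i) * Z = C * Z * y ^ ((1:ℝ)/i) by ring]
            apply mul_le_mul_of_nonneg_right _ (by positivity)
            nlinarith
    exact le_trans hstep1 hstep2

lemma powerfull_decomp (i : ℕ) (hi : 2 ≤ i) :
    ∀ n : ℕ, 1 ≤ n → PowerFull i n →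
      ∃ a : ℕ, ∃ c : ℕ → ℕ, 1 ≤ a ∧ (∀ j, 1 ≤ c j) ∧
        n = a ^ i * ∏ j ∈ Finset.Icc (i + 1) (i + (i - 1)), c j ^ j := by
  intro n
  induction n using Nat.strong_induction_on with
  | _ n ih =>
    intro hn hpf
    rcases eq_or_lt_of_le hn with h1 | h1
    · refine ⟨1, fun _ => 1, le_refl 1, fun _ => le_refl 1, by simp [← h1]⟩
    obtain ⟨p, hp, hpn⟩ := Nat.exists_prime_and_dvd (by omega : n ≠ 1)
    have hn0 : n ≠ 0 := by omega
    set e := n.factorization p with he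
    have hie : i ≤ e := (Nat.Prime.pow_dvd_iff_le_factorization hp hn0).mp (hpf p hp hpn)
    set n' := ordCompl[p] n with hn'
    have hmul : p ^ e * n' = n := Nat.ordProj_mul_ordCompl_eq_self n p
    have hpn' : ¬ p ∣ n' := Nat.not_dvd_ordCompl hp hn0
    have hn'0 : 0 < n' := Nat.ordCompl_pos p hn0
    have hp2 : 2 ≤ p := hp.two_le
    have hpe : 2 ≤ p ^ e := by
      calc 2 ≤ p := hp2
        _ ≤ p ^ e := Nat.le_self_pow (by omega) p
    have hlt : n' < n := by
      calc n' < 2 * n' := by omega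
        _ ≤ p ^ e * n' := Nat.mul_le_mul_right _ hpe
        _ = n := hmul
    have hpf' : PowerFull i n' := by
      intro q hq hqn'
      have hqn : q ∣ n := hqn'.trans (Dvd.intro_left _ hmul)
      have hqi : q ^ i ∣ n := hpf q hq hqn
      have hqp : q ≠ p := fun h => hpn' (h ▸ hqn')
      have hcop : (q ^ i).Coprime (p ^ e) :=
        Nat.Coprime.pow _ _ ((Nat.coprime_primes hq hp).mpr hqp)
      exact hcop.dvd_of_dvd_mul_left (hmul ▸ hqi)
    obtain ⟨a', c', ha', hc', hrep⟩ := ih n' hlt hn'0 hpf'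
    obtain ⟨α, r, heq, hrlt⟩ : ∃ α r, e = i * α + r ∧ r < i :=
      ⟨e / i, e % i, (Nat.div_add_mod e i).symm, Nat.mod_lt _ (by omega)⟩
    have hα1 : 1 ≤ α := by
      rcases Nat.eq_zero_or_pos α with h | h
      · subst h; rw [Nat.mul_zero, Nat.zero_add] at heq; omega
      · exact h
    by_cases hr0 : r = 0
    · refine ⟨a' * p ^ α, c', Nat.mul_pos ha' (pow_pos (by omega) α), hc', ?_⟩
      rw [mul_pow, ← pow_mul]
      calc n = p ^ e * n' := hmul.symm
        _ = p ^ e * (a' ^ i * ∏ j ∈ Finset.Icc (i + 1) (i + (i - 1)), c' j ^ j) := by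
            rw [← hrep]
        _ = a' ^ i * p ^ (α * i) * ∏ j ∈ Finset.Icc (i + 1) (i + (i - 1)), c' j ^ j := by
            rw [heq, hr0, Nat.add_zero, Nat.mul_comm i α]; ring
    · set j0 := i + r with hj0lab
      have hj0mem : j0 ∈ Finset.Icc (i + 1) (i + (i - 1)) := by
        rw [Finset.mem_Icc]; omega
      refine ⟨a' * p ^ (α - 1), fun j => if j = j0 then c' j * p else c' j,
        Nat.mul_pos ha' (pow_pos (by omega) _), fun j => by dsimp only; split <;> [exact le_trans (hc' j) (Nat.le_mul_of_pos_right _ (by omega)); exact hc' j], ?_⟩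
      have hprodeq : ∏ j ∈ Finset.Icc (i + 1) (i + (i - 1)),
            (if j = j0 then c' j * p else c' j) ^ j
          = (∏ j ∈ Finset.Icc (i + 1) (i + (i - 1)), c' j ^ j) * p ^ j0 := by
        have h1 : ∀ j ∈ Finset.Icc (i + 1) (i + (i - 1)),
            (if j = j0 then c' j * p else c' j) ^ j
              = c' j ^ j * (if j = j0 then p ^ j else 1) := by
          intro j _
          split <;> simp [mul_pow]
        rw [Finset.prod_congr rfl h1, Finset.prod_mul_distrib,
          Finset.prod_ite_eq' (Finset.Icc (i + 1) (i + (i - 1))) j0 (fun j => p ^ j),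
          if_pos hj0mem]
      rw [hprodeq]
      have hee : e = i * (α - 1) + j0 := by
        obtain ⟨β, rfl⟩ : ∃ β, α = β + 1 := ⟨α - 1, by omega⟩
        have h2 : i * (β + 1) = i * β + i := by ring
        have h3 : (β + 1) - 1 = β := rfl
        rw [h3]
        omega
      calc n = p ^ e * n' := hmul.symm
        _ = p ^ e * (a' ^ i * ∏ j ∈ Finset.Icc (i + 1) (i + (i - 1)), c' j ^ j) := by
            rw [← hrep]
        _ = a' ^ i * p ^ (i * (α - 1)) *
              ((∏ j ∈ Finset.Icc (i + 1) (i + (i - 1)), c' j ^ j) * p ^ j0) := by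
            rw [hee, pow_add]; ring
        _ = (a' * p ^ (α - 1)) ^ i *
              ((∏ j ∈ Finset.Icc (i + 1) (i + (i - 1)), c' j ^ j) * p ^ j0) := by
            rw [mul_pow, ← pow_mul, mul_comm (α - 1) i]

/-- The number of `i`-th power-full integers `1 ≤ n ≤ x` is at most `C·x^{1/i}`
for a constant `C` depending only on `i`. -/
theorem powerfull_count (i : ℕ) (hi : 2 ≤ i) :
    ∃ C : ℝ, 0 < C ∧ ∀ x : ℝ, 1 ≤ x →
      ({n : ℕ | 1 ≤ n ∧ (n : ℝ) ≤ x ∧ PowerFull i n}.ncard : ℝ) ≤ C * x ^ ((1 : ℝ) / i) := by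
  obtain ⟨C, hC, hCb⟩ := count_lemma i hi (i - 1)
  refine ⟨C, hC, fun x hx => ?_⟩
  have hsub : {n : ℕ | 1 ≤ n ∧ (n : ℝ) ≤ x ∧ PowerFull i n}
      ⊆ {n : ℕ | 1 ≤ n ∧ (n : ℝ) ≤ x ∧ ∃ a : ℕ, ∃ c : ℕ → ℕ, 1 ≤ a ∧ (∀ j, 1 ≤ c j) ∧
          n = a ^ i * ∏ j ∈ Finset.Icc (i + 1) (i + (i - 1)), c j ^ j} := by
    rintro n ⟨hn1, hnx, hpf⟩
    exact ⟨hn1, hnx, powerfull_decomp i hi n hn1 hpf⟩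
  calc ({n : ℕ | 1 ≤ n ∧ (n : ℝ) ≤ x ∧ PowerFull i n}.ncard : ℝ)
      ≤ (({n : ℕ | 1 ≤ n ∧ (n : ℝ) ≤ x ∧ ∃ a : ℕ, ∃ c : ℕ → ℕ, 1 ≤ a ∧ (∀ j, 1 ≤ c j) ∧
          n = a ^ i * ∏ j ∈ Finset.Icc (i + 1) (i + (i - 1)), c j ^ j}).ncard : ℝ) := by
        exact_mod_cast Nat.cast_le.mpr (Set.ncard_le_ncard hsub (sets_finite i (i - 1) x))
    _ ≤ C * x ^ ((1 : ℝ) / i) := hCb x (by linarith)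
end

section
/- Let f(x) = (d+1−x)/((d+x+1)(d−x)) on the interval [1, d−1] for an integer d ≥ 3. Then f is minimized over the integers 1,…,d−1 at one of the two integers d+1−⌊√(2(d+1))⌋ and d+1−⌈√(2(d+1))⌉; that is, min_{j=1,…,d−1} f(j) = min{ f(d+1−⌊√(2(d+1))⌋), f(d+1−⌈√(2(d+1))⌉) }. -/
/-!
With `s = d + 1 - x` and `N = 2(d+1)` one has `f(x) = s / ((N - s)(s - 1))`, and for
`1 < a, b < N` the difference of this function at `b` and at `a` has the sign of
`(a - b)(N - ab)`. So it decreases on `(1, √N]` and increases on `[√N, N)`, and over the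
integers its minimum is attained at `⌊√N⌋` or `⌈√N⌉`.
-/

open Set

noncomputable def reflectedF (N s : ℝ) : ℝ := s / ((N - s) * (s - 1))

lemma reflectedF_sub_reflectedF {N a b : ℝ} (ha : 1 < a) (hb : 1 < b) (haN : a < N)
    (hbN : b < N) :
    reflectedF N b - reflectedF N a =
      (a - b) * (N - a * b) / ((N - a) * (a - 1) * ((N - b) * (b - 1))) := by
  have : N - a ≠ 0 := by linarith
  have : a - 1 ≠ 0 := by linarith
  have : N - b ≠ 0 := by linarith
  have : b - 1 ≠ 0 := by linarith
  unfold reflectedF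
  field_simp
  ring

lemma reflectedF_le_reflectedF {N a b : ℝ} (ha : 1 < a) (hb : 1 < b) (haN : a < N)
    (hbN : b < N) (h : 0 ≤ (a - b) * (N - a * b)) :
    reflectedF N a ≤ reflectedF N b := by
  rw [← sub_nonneg, reflectedF_sub_reflectedF ha hb haN hbN]
  apply div_nonneg h
  apply mul_nonneg <;> apply mul_nonneg <;> linarith

lemma antitoneOn_reflectedF (N : ℝ) : AntitoneOn (reflectedF N) (Ioc 1 √N) := by
  rintro a ⟨ha, haN⟩ b ⟨hb, hbN⟩ hab
  have hN : 0 ≤ N := by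
    by_contra! h
    linarith [Real.sqrt_eq_zero'.mpr h.le]
  have hsq : √N * √N = N := Real.mul_self_sqrt hN
  have hb_lt : b < N := by nlinarith
  apply reflectedF_le_reflectedF hb ha hb_lt (by linarith)
  apply mul_nonneg (by linarith)
  nlinarith

lemma monotoneOn_reflectedF {N : ℝ} (hN : 1 < N) : MonotoneOn (reflectedF N) (Ico √N N) := by
  rintro a ⟨ha, haN⟩ b ⟨hb, hbN⟩ hab
  have hsq : √N * √N = N := Real.mul_self_sqrt (by linarith)
  have hN' : 1 < √N := Real.lt_sqrt_of_sq_lt (by nlinarith)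
  apply reflectedF_le_reflectedF (by linarith) (by linarith) haN hbN
  apply mul_nonneg_of_nonpos_of_nonpos (by linarith)
  nlinarith

lemma min_floor_ceil_le_of_antitoneOn_of_monotoneOn {φ : ℝ → ℝ} {a b r : ℝ} (hr : 0 ≤ r)
    (hanti : AntitoneOn φ (Icc a r)) (hmono : MonotoneOn φ (Icc r b))
    (ha : a ≤ ⌊r⌋₊) (hb : ⌈r⌉₊ ≤ b) {n : ℕ} (hna : a ≤ n) (hnb : n ≤ b) :
    min (φ ⌊r⌋₊) (φ ⌈r⌉₊) ≤ φ n := by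
  rcases le_or_gt n ⌊r⌋₊ with hn | hn
  · have hnr : (n : ℝ) ≤ r := (Nat.le_floor_iff hr).mp hn
    exact (min_le_left _ _).trans
      (hanti ⟨hna, hnr⟩ ⟨ha, Nat.floor_le hr⟩ (Nat.cast_le.mpr hn))
  · have hn : ⌈r⌉₊ ≤ n := (Nat.ceil_le_floor_add_one r).trans hn
    exact (min_le_right _ _).trans
      (hmono ⟨Nat.le_ceil r, hb⟩ ⟨(Nat.le_ceil r).trans (Nat.cast_le.mpr hn), hnb⟩
        (Nat.cast_le.mpr hn))

lemma two_le_floor_sqrt {d : ℕ} (hd : 1 ≤ d) : 2 ≤ ⌊√(2 * ((d : ℝ) + 1))⌋₊ := by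
  have hd : (1 : ℝ) ≤ d := by exact_mod_cast hd
  apply Nat.le_floor
  rw [Real.le_sqrt] <;> norm_num <;> linarith

lemma ceil_sqrt_le {d : ℕ} (hd : 3 ≤ d) : ⌈√(2 * ((d : ℝ) + 1))⌉₊ ≤ d := by
  have hd : (3 : ℝ) ≤ d := by exact_mod_cast hd
  apply Nat.ceil_le.mpr
  rw [Real.sqrt_le_left] <;> nlinarith

lemma div_eq_reflectedF (D x : ℝ) :
    (D + 1 - x) / ((D + x + 1) * (D - x)) = reflectedF (2 * (D + 1)) (D + 1 - x) := by
  unfold reflectedF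
  ring_nf

/-- For `d ≥ 3` and `f(x) = (d+1−x)/((d+x+1)(d−x))`, the minimum of `f` over the
integers `1,…,d−1` equals `min{ f(d+1−⌊√(2(d+1))⌋), f(d+1−⌈√(2(d+1))⌉) }`. -/
theorem f_min_over_integers (d : ℕ) (hd : 3 ≤ d) :
    IsLeast
      {y : ℝ | ∃ j : ℕ, 1 ≤ j ∧ j ≤ d - 1 ∧
        y = ((d : ℝ) + 1 - j) / (((d : ℝ) + j + 1) * ((d : ℝ) - j))}
      (min
        (((d : ℝ) + 1 - ((d : ℝ) + 1 - ⌊Real.sqrt (2 * (d + 1))⌋₊)) /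
          (((d : ℝ) + ((d : ℝ) + 1 - ⌊Real.sqrt (2 * (d + 1))⌋₊) + 1) *
            ((d : ℝ) - ((d : ℝ) + 1 - ⌊Real.sqrt (2 * (d + 1))⌋₊))))
        (((d : ℝ) + 1 - ((d : ℝ) + 1 - ⌈Real.sqrt (2 * (d + 1))⌉₊)) /
          (((d : ℝ) + ((d : ℝ) + 1 - ⌈Real.sqrt (2 * (d + 1))⌉₊) + 1) *
            ((d : ℝ) - ((d : ℝ) + 1 - ⌈Real.sqrt (2 * (d + 1))⌉₊))))) := by
  simp only [div_eq_reflectedF]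
  simp only [sub_sub_cancel]
  set N : ℝ := 2 * ((d : ℝ) + 1)
  have hfloor := two_le_floor_sqrt (d := d) (by omega)
  have hceil := ceil_sqrt_le hd
  have hmem : ∀ s : ℕ, 2 ≤ s → s ≤ d →
      ∃ j : ℕ, 1 ≤ j ∧ j ≤ d - 1 ∧ reflectedF N s = reflectedF N ((d : ℝ) + 1 - j) :=
    fun s hs hsd => ⟨d + 1 - s, by omega, by omega, by
      push_cast [Nat.cast_sub (by omega : s ≤ d + 1)]; ring_nf⟩
  constructor
  · rcases min_choice (reflectedF N ⌊√N⌋₊) (reflectedF N ⌈√N⌉₊) with h | h <;> rw [h]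
    · exact hmem _ hfloor ((Nat.floor_le_ceil _).trans hceil)
    · exact hmem _ (hfloor.trans (Nat.floor_le_ceil _)) hceil
  · rintro _ ⟨j, hj1, hjd, rfl⟩
    have hd_real : (3 : ℝ) ≤ d := by exact_mod_cast hd
    rw [show (d : ℝ) + 1 - j = ((d + 1 - j : ℕ) : ℝ) by
      push_cast [Nat.cast_sub (by omega : j ≤ d + 1)]; ring]
    exact min_floor_ceil_le_of_antitoneOn_of_monotoneOn (Real.sqrt_nonneg N)
      ((antitoneOn_reflectedF N).mono (Icc_subset_Ioc (by norm_num) le_rfl))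
      ((monotoneOn_reflectedF (by linarith)).mono (Icc_subset_Ico_right (by linarith)))
      (Nat.ofNat_le_cast.mpr hfloor) (Nat.cast_le.mpr hceil)
      (by norm_cast; omega) (by norm_cast; omega)
end
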